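/- arXiv:2103.09667 — 4 statements merged into one kernel-verified Lean document; each statement's English description precedes it below -/
import Mathlib

section
/- Let K be a function field with constant field F_q, let v be a normalized valuation on K, and let W ⊂ K be a finite-dimensional F_q-vector subspace such that v(w) > 0 for every w ∈ W. If i is an integer with 0 ≤ i < (q-1)·dim_{F_q} W, then for every x ∈ K, the sum over all w ∈ W of (x+w)^i equals 0. -/
/-!
Split `W = 𝔽_q e ⊕ W'`. In the binomial expansion of `(c • e + (x + w'))^j` the sums over
`c` and `w'` separate: `∑_c c^k` vanishes for `k < q - 1`, and for `k ≥ q - 1` the sum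
`∑_{w'} (x + w')^(j - k)` vanishes by induction on the dimension, since `j - k` is below
`(q - 1) · dim W'`.
-/

open Finset

def PowerSumsVanishBelow {ι R : Type*} [Fintype ι] [CommSemiring R] (f : ι → R) (m : ℕ) :
    Prop :=
  ∀ x : R, ∀ j < m, ∑ a, (x + f a) ^ j = 0

section CommSemiring

variable {α β R : Type*} [CommSemiring R]

theorem Finset.sum_sum_add_pow (s : Finset α) (t : Finset β) (u : α → R) (w : β → R)
    (j : ℕ) :
    ∑ a ∈ s, ∑ b ∈ t, (u a + w b) ^ j =
      ∑ k ∈ range (j + 1),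
        (∑ a ∈ s, u a ^ k) * (∑ b ∈ t, w b ^ (j - k)) * (j.choose k : R) := by
  simp_rw [add_pow, sum_mul_sum, sum_mul]
  exact (sum_congr rfl fun a _ => sum_comm).trans sum_comm

variable [Fintype α] [Fintype β]

theorem PowerSumsVanishBelow.comp_equiv {γ : Type*} [Fintype γ] {f : α → R} {m : ℕ}
    (hf : PowerSumsVanishBelow f m) (σ : γ ≃ α) : PowerSumsVanishBelow (f ∘ σ) m :=
  fun x j hj => (σ.sum_comp fun a => (x + f a) ^ j).trans (hf x j hj)

theorem PowerSumsVanishBelow.add {u : α → R} {f : β → R} {r m : ℕ}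
    (hu : ∀ k < r, ∑ a, u a ^ k = 0) (hf : PowerSumsVanishBelow f m) :
    PowerSumsVanishBelow (fun p : α × β => u p.1 + f p.2) (r + m) := by
  intro x j hj
  rw [Fintype.sum_prod_type]
  simp_rw [add_left_comm x (u _)]
  rw [sum_sum_add_pow]
  refine sum_eq_zero fun k hk => ?_
  rcases lt_or_ge k r with hkr | hrk
  · rw [hu k hkr, zero_mul, zero_mul]
  · have hkj := mem_range.mp hk
    rw [hf x (j - k) (by omega), mul_zero, zero_mul]

end CommSemiring

section FiniteField

variable (Fq : Type*) {K : Type*} [Field Fq] [Fintype Fq] [CommRing K] [Algebra Fq K]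

theorem sum_smul_pow_lt_card_sub_one (e : K) :
    ∀ k < Fintype.card Fq - 1, ∑ c : Fq, (c • e) ^ k = 0 := by
  intro k hk
  simp_rw [smul_pow, ← sum_smul, FiniteField.sum_pow_lt_card_sub_one Fq k hk, zero_smul]

theorem powerSumsVanishBelow_sum_smul {n : ℕ} (e : Fin n → K) :
    PowerSumsVanishBelow (fun g : Fin n → Fq => ∑ i, g i • e i)
      ((Fintype.card Fq - 1) * n) := by
  induction n with
  | zero => intro x j hj; simp at hj
  | succ n ih =>
    have := (PowerSumsVanishBelow.add (sum_smul_pow_lt_card_sub_one Fq (e 0))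
      (ih (e ∘ Fin.succ))).comp_equiv (Fin.consEquiv fun _ => Fq).symm
    convert this using 1
    · ext g
      simp [Fin.sum_univ_succ, Fin.consEquiv, Fin.tail]
    · ring

variable {Fq}

theorem Submodule.powerSumsVanishBelow (W : Submodule Fq K) [Fintype W]
    [FiniteDimensional Fq W] :
    PowerSumsVanishBelow (fun w : W => (w : K)) ((Fintype.card Fq - 1) * Module.finrank Fq W) := by
  let b := Module.finBasis Fq W
  convert (powerSumsVanishBelow_sum_smul Fq fun i => (b i : K)).comp_equiv b.equivFun.toEquiv
    using 2 with w
  nth_rw 1 [← b.sum_equivFun w]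
  simp only [Submodule.coe_sum, Submodule.coe_smul, Function.comp_apply, LinearEquiv.coe_toEquiv]

end FiniteField

theorem stmt0_general (q : ℕ)
    (Fq K : Type*) [Field Fq] [Fintype Fq] [Field K] [Algebra Fq K]
    (hq : Fintype.card Fq = q)
    (W : Subspace Fq K) [FiniteDimensional Fq W] [Fintype W]
    (i : ℕ) (hi : i < (q - 1) * Module.finrank Fq W)
    (x : K) :
    ∑ w : W, (x + (w : K)) ^ i = 0 := by
  subst hq
  exact W.powerSumsVanishBelow x i hi

/-- Let `K` be a function field with constant field `𝔽_q` (`K` a field of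
characteristic `p` containing a finite field `Fq` with `q` elements), `v` a normalized
(surjective) additive valuation on `K`, and `W ⊆ K` a finite-dimensional `Fq`-subspace
all of whose elements have positive valuation.  If `0 ≤ i < (q-1)·dim_{Fq} W`, then for
every `x ∈ K` we have `∑_{w ∈ W} (x+w)^i = 0`. -/
theorem stmt0 (p : ℕ) [Fact p.Prime] (q : ℕ)
    (Fq K : Type*) [Field Fq] [Fintype Fq] [Field K] [Algebra Fq K]
    (hq : Fintype.card Fq = q) (hchar : CharP K p)
    (v : AddValuation K (WithTop ℤ))
    (hv : ∀ n : ℤ, ∃ x : Kˣ, v (x : K) = (n : WithTop ℤ))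
    (W : Subspace Fq K) [FiniteDimensional Fq W] [Fintype W]
    (hW : ∀ w ∈ W, 0 < v w)
    (i : ℕ) (hi : i < (q - 1) * Module.finrank Fq W)
    (x : K) :
    ∑ w : W, (x + (w : K)) ^ i = 0 :=
  stmt0_general q Fq K hq W i hi x
end

section
/- Let R be a commutative ring, 0 → M' → M → R/J → 0 an exact sequence of finitely generated R-modules where the quotient is cyclic of the form R/J for an ideal J generated by one element x. If Fitt_R(M) is principal generated by θ, then x · Fitt_R(M') = Fitt_R(M), i.e. Fitt_R(M') is generated by θ/x whenever x is a non-zerodivisor dividing θ. -/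
/-!
For any exact `M' → M → M'' → 0`, lifting the generators of a presentation of `M''` to `M` and
adjoining them to a presentation of `M'` gives a presentation of `M` with block lower triangular
relation matrices, so `Fitt(M') · Fitt(M'') ≤ Fitt(M)`; and `x ∈ Fitt(R ⧸ (x))`.

Conversely, let `φ` present `M`, with `g ∘ φ = (· ⬝ᵥ r) mod x` and `g (φ s) = 1`, so that
`s ⬝ᵥ r = 1 + x t`. Then `M'` is generated by lifts of the `φ eᵢ - rᵢ • φ s` and of `x • φ s`,
and a relation matrix `A` of `M` (whose rows satisfy `A *ᵥ r = x • b`) extends to the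
relation matrix `B = [A b; s t]` of `M'`. Since `B · [1 (-r); 0 x] = [A 0; s (-1)]`, we get
`det A = -x · det B ∈ (x) · Fitt(M')`.
-/

/-- The (0-th) Fitting ideal of a module `M` over a commutative ring `R`. -/
noncomputable def fittingIdeal (R M : Type*) [CommRing R] [AddCommGroup M]
    [Module R M] : Ideal R :=
  ⨆ (n : ℕ) (φ : (Fin n → R) →ₗ[R] M) (_ : Function.Surjective φ),
    Ideal.span {d : R | ∃ A : Matrix (Fin n) (Fin n) R,
      (∀ i, φ (A i) = 0) ∧ d = A.det}

section FittingIdeal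

variable {R M : Type*} [CommRing R] [AddCommGroup M] [Module R M]

theorem det_mem_fittingIdeal {ι : Type*} [Fintype ι] [DecidableEq ι]
    {φ : (ι → R) →ₗ[R] M} (hφ : Function.Surjective φ) {A : Matrix ι ι R}
    (hA : ∀ i, φ (A i) = 0) : A.det ∈ fittingIdeal R M := by
  set e := Fintype.equivFin ι
  let φ' : (Fin (Fintype.card ι) → R) →ₗ[R] M := φ ∘ₗ LinearMap.funLeft R R e
  have hφ' : Function.Surjective φ' :=
    hφ.comp (LinearMap.funLeft_surjective_of_injective _ _ _ e.injective)
  have hA' : ∀ i, φ' (Matrix.reindex e e A i) = 0 := fun i => by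
    have hrow : Matrix.reindex e e A i ∘ e = A (e.symm i) := by ext; simp
    change φ (Matrix.reindex e e A i ∘ e) = 0
    rw [hrow]
    exact hA _
  have hle : Ideal.span {d | ∃ B : Matrix (Fin _) (Fin _) R, (∀ i, φ' (B i) = 0) ∧ d = B.det}
      ≤ fittingIdeal R M :=
    le_iSup_of_le _ (le_iSup_of_le φ' (le_iSup_of_le hφ' le_rfl))
  rw [← Matrix.det_reindex_self e]
  exact hle (Ideal.subset_span ⟨_, hA', rfl⟩)

theorem fittingIdeal_le {I : Ideal R}
    (h : ∀ (n : ℕ) (φ : (Fin n → R) →ₗ[R] M), Function.Surjective φ →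
      ∀ A : Matrix (Fin n) (Fin n) R, (∀ i, φ (A i) = 0) → A.det ∈ I) :
    fittingIdeal R M ≤ I :=
  iSup_le fun n => iSup_le fun φ => iSup_le fun hφ => Ideal.span_le.2 <| by
    rintro _ ⟨A, hA, rfl⟩
    exact h n φ hφ A hA

theorem mem_fittingIdeal_quotient_span_singleton (x : R) :
    x ∈ fittingIdeal R (R ⧸ Ideal.span {x}) := by
  have hsurj : Function.Surjective
      ((Ideal.span {x}).mkQ ∘ₗ LinearMap.proj (R := R) (φ := fun _ : Unit => R) ()) := fun v => by
    obtain ⟨a, rfl⟩ := Submodule.mkQ_surjective _ v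
    exact ⟨fun _ => a, rfl⟩
  simpa [Matrix.det_unique] using
    det_mem_fittingIdeal hsurj (A := Matrix.of fun _ _ => x) fun _ => by simp

end FittingIdeal

section Presentation

variable {R M : Type*} [CommRing R] [AddCommGroup M] [Module R M] {ι κ : Type*}

def LinearMap.sumElim (L₁ : (ι → R) →ₗ[R] M) (L₂ : (κ → R) →ₗ[R] M) :
    (ι ⊕ κ → R) →ₗ[R] M :=
  L₁.coprod L₂ ∘ₗ (LinearEquiv.sumArrowLequivProdArrow ι κ R R).toLinearMap

@[simp]
theorem LinearMap.sumElim_apply (L₁ : (ι → R) →ₗ[R] M) (L₂ : (κ → R) →ₗ[R] M)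
    (w : ι ⊕ κ → R) : L₁.sumElim L₂ w = L₁ (w ∘ Sum.inl) + L₂ (w ∘ Sum.inr) :=
  rfl

theorem LinearMap.sumElim_surjective {L₁ : (ι → R) →ₗ[R] M} {L₂ : (κ → R) →ₗ[R] M}
    (h : ∀ y, ∃ v w, L₁ v + L₂ w = y) : Function.Surjective (L₁.sumElim L₂) := fun y => by
  obtain ⟨v, w, rfl⟩ := h y
  exact ⟨Sum.elim v w, rfl⟩

theorem det_fromBlocks_mem_fittingIdeal [Fintype ι] [Fintype κ] [DecidableEq ι]
    [DecidableEq κ] {L₁ : (ι → R) →ₗ[R] M} {L₂ : (κ → R) →ₗ[R] M}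
    (hL : Function.Surjective (L₁.sumElim L₂)) {A : Matrix ι ι R} {B : Matrix ι κ R}
    {C : Matrix κ ι R} {D : Matrix κ κ R} (hAB : ∀ i, L₁ (A i) + L₂ (B i) = 0)
    (hCD : ∀ k, L₁ (C k) + L₂ (D k) = 0) :
    (Matrix.fromBlocks A B C D).det ∈ fittingIdeal R M :=
  det_mem_fittingIdeal hL <| by
    rintro (i | k)
    · exact hAB i
    · exact hCD k

end Presentation

section Exact

variable {R M' M M'' : Type*} [CommRing R] [AddCommGroup M'] [AddCommGroup M]
  [AddCommGroup M''] [Module R M'] [Module R M] [Module R M'']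
  {f : M' →ₗ[R] M} {g : M →ₗ[R] M''}

theorem det_mul_det_mem_fittingIdeal_of_exact (hg : Function.Surjective g)
    (hfg : Function.Exact f g) {k l : ℕ} {ψ : (Fin k → R) →ₗ[R] M'}
    (hψ : Function.Surjective ψ) {C : Matrix (Fin k) (Fin k) R} (hC : ∀ i, ψ (C i) = 0)
    {χ : (Fin l → R) →ₗ[R] M''} (hχ : Function.Surjective χ)
    {D : Matrix (Fin l) (Fin l) R} (hD : ∀ i, χ (D i) = 0) :
    C.det * D.det ∈ fittingIdeal R M := by
  choose m hm using fun j => hg (χ (Pi.single j 1))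
  set L := Fintype.linearCombination R m
  have hgL : g ∘ₗ L = χ := by ext j; simp [L, hm]
  have hker : ∀ y, g y = 0 → ∃ v, f (ψ v) = y := fun y hy => by
    obtain ⟨z, rfl⟩ := (hfg y).1 hy
    obtain ⟨v, rfl⟩ := hψ z
    exact ⟨v, rfl⟩
  have hL : Function.Surjective ((f ∘ₗ ψ).sumElim L) := by
    refine LinearMap.sumElim_surjective fun y => ?_
    obtain ⟨w, hw⟩ := hχ (g y)
    obtain ⟨v, hv⟩ := hker (y - L w) (by rw [map_sub, ← LinearMap.comp_apply, hgL, hw, sub_self])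
    exact ⟨v, w, by simp [hv]⟩
  choose c hc using fun i => hker (L (D i)) (by rw [← LinearMap.comp_apply, hgL, hD])
  rw [← Matrix.det_fromBlocks_zero₁₂ C (Matrix.of fun i j => -c i j) D]
  refine det_fromBlocks_mem_fittingIdeal hL (fun i => by
    change f (ψ (C i)) + L 0 = 0
    rw [hC, map_zero, map_zero, add_zero]) fun i => ?_
  change f (ψ (-c i)) + L (D i) = 0
  rw [map_neg, map_neg, hc, neg_add_cancel]

theorem fittingIdeal_mul_le_of_exact (hg : Function.Surjective g) (hfg : Function.Exact f g) :
    fittingIdeal R M' * fittingIdeal R M'' ≤ fittingIdeal R M := by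
  have hcolon : fittingIdeal R M' ≤ (fittingIdeal R M).colon (fittingIdeal R M'') :=
    fittingIdeal_le fun k ψ hψ C hC => Submodule.mem_colon.2 fun b hb =>
      fittingIdeal_le (I := Submodule.comap (LinearMap.mulLeft R C.det) (fittingIdeal R M))
        (fun l χ hχ D hD => det_mul_det_mem_fittingIdeal_of_exact hg hfg hψ hC hχ hD) hb
  exact Ideal.mul_le.2 fun a ha b hb => Submodule.mem_colon.1 (hcolon ha) b hb

end Exact

open Matrix in
theorem Matrix.det_fromBlocks_mul_eq_neg_det {R n : Type*} [CommRing R] [Fintype n]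
    [DecidableEq n] {A : Matrix n n R} {b r s : n → R} {x t : R} (hb : A *ᵥ r = x • b)
    (hs : s ⬝ᵥ r = 1 + x * t) :
    (fromBlocks A (replicateCol Unit b) (replicateRow Unit s) (of fun _ _ => t)).det * x =
      -A.det := by
  set P : Matrix (n ⊕ Unit) (n ⊕ Unit) R :=
    fromBlocks 1 (replicateCol Unit (-r)) 0 (of fun _ _ => x)
  have hP : P.det = x := by simp [P, det_fromBlocks_zero₂₁, det_unique]
  have hBP : fromBlocks A (replicateCol Unit b) (replicateRow Unit s) (of fun _ _ => t) * P =
      fromBlocks A 0 (replicateRow Unit s) (-1) := by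
    rw [fromBlocks_multiply]
    congr 1
    · simp
    · ext i _
      have hbi : ∑ j, A i j * r j = x * b i := congrFun hb i
      simp [mul_apply, hbi, mul_comm]
    · simp
    · ext
      have hsr : ∑ i, s i * r i = 1 + x * t := hs
      simp [mul_apply, hsr]
      ring
  rw [← hP, ← det_mul, hBP, det_fromBlocks_zero₁₂, det_unique (-1 : Matrix Unit Unit R)]
  simp

theorem Function.Exact.exists_comp_eq_of_projective {R M' M M'' P : Type*} [CommRing R]
    [AddCommGroup M'] [AddCommGroup M] [AddCommGroup M''] [AddCommGroup P] [Module R M']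
    [Module R M] [Module R M''] [Module R P] [Module.Projective R P] {f : M' →ₗ[R] M}
    {g : M →ₗ[R] M''} (hfg : Function.Exact f g) (h : P →ₗ[R] M) (hh : g ∘ₗ h = 0) :
    ∃ l : P →ₗ[R] M', f ∘ₗ l = h := by
  have hrange : ∀ p, h p ∈ LinearMap.range f := fun p =>
    (hfg (h p)).1 (LinearMap.congr_fun hh p)
  obtain ⟨l, hl⟩ := Module.projective_lifting_property f.rangeRestrict
    (h.codRestrict _ hrange) f.surjective_rangeRestrict
  exact ⟨l, LinearMap.ext fun p => congrArg Subtype.val (LinearMap.congr_fun hl p)⟩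

theorem LinearMap.exists_eq_mk_dotProduct {R ι : Type*} [CommRing R] [Fintype ι]
    {I : Ideal R} (h : (ι → R) →ₗ[R] R ⧸ I) :
    ∃ r : ι → R, ∀ v, h v = Ideal.Quotient.mk I (v ⬝ᵥ r) := by
  classical
  choose r hr using fun i => Ideal.Quotient.mk_surjective (h fun j => if i = j then 1 else 0)
  refine ⟨r, fun v => ?_⟩
  rw [LinearMap.pi_apply_eq_sum_univ h v, dotProduct, map_sum]
  simp [← hr, Algebra.smul_def]

section CyclicCokernel

open Matrix

variable {R M' M : Type*} [CommRing R] [AddCommGroup M'] [AddCommGroup M] [Module R M']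
  [Module R M]

theorem Function.Exact.exists_map_eq_sub_dotProduct_smul {ι : Type*} [Fintype ι]
    {I : Ideal R} {f : M' →ₗ[R] M} {g : M →ₗ[R] R ⧸ I} (hfg : Function.Exact f g)
    {φ : (ι → R) →ₗ[R] M} {r : ι → R} (hr : ∀ v, g (φ v) = Ideal.Quotient.mk I (v ⬝ᵥ r))
    {m₀ : M} (hm₀ : g m₀ = 1) :
    ∃ L : (ι → R) →ₗ[R] M', ∀ v, f (L v) = φ v - (v ⬝ᵥ r) • m₀ := by
  obtain ⟨L, hL⟩ := hfg.exists_comp_eq_of_projective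
    (φ - (Fintype.linearCombination R r).smulRight m₀) <| by
      refine LinearMap.ext fun v => ?_
      rw [LinearMap.comp_apply, LinearMap.sub_apply, map_sub, hr, LinearMap.smulRight_apply,
        map_smul, hm₀, Algebra.smul_def, mul_one, Ideal.Quotient.algebraMap_eq,
        LinearMap.zero_apply, sub_eq_zero]
      rfl
  exact ⟨L, fun v => LinearMap.congr_fun hL v⟩

variable {x : R} {f : M' →ₗ[R] M} {g : M →ₗ[R] R ⧸ Ideal.span {x}}

theorem det_mem_span_singleton_mul_fittingIdeal (hf : Function.Injective f)
    (hg : Function.Surjective g) (hfg : Function.Exact f g) {n : ℕ}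
    {φ : (Fin n → R) →ₗ[R] M} (hφ : Function.Surjective φ) {A : Matrix (Fin n) (Fin n) R}
    (hA : ∀ i, φ (A i) = 0) : A.det ∈ Ideal.span {x} * fittingIdeal R M' := by
  have hmk : ∀ a, Ideal.Quotient.mk (Ideal.span {x}) a = 0 ↔ x ∣ a := fun a =>
    Ideal.Quotient.eq_zero_iff_mem.trans Ideal.mem_span_singleton
  obtain ⟨r, hr⟩ := (g ∘ₗ φ).exists_eq_mk_dotProduct
  obtain ⟨m₀, hm₀⟩ := hg 1
  obtain ⟨s, rfl⟩ := hφ m₀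
  obtain ⟨t, ht⟩ : x ∣ s ⬝ᵥ r - 1 := by
    rw [← hmk, map_sub, ← hr, LinearMap.comp_apply, hm₀, map_one, sub_self]
  obtain ⟨u, hu⟩ : ∃ u, f u = x • φ s := (hfg _).1 <| by
    rw [map_smul, hm₀, Algebra.smul_def, mul_one, Ideal.Quotient.algebraMap_eq, hmk]
  obtain ⟨L, hL⟩ := hfg.exists_map_eq_sub_dotProduct_smul hr hm₀
  have hfL : ∀ v c, f (L v + c • u) = φ v - (v ⬝ᵥ r - x * c) • φ s := fun v c => by
    rw [map_add, hL, map_smul, hu, smul_smul, sub_smul, mul_comm c]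
    abel
  set L₂ : (Unit → R) →ₗ[R] M' := (LinearMap.proj ()).smulRight u
  have hsurj : Function.Surjective (L.sumElim L₂) := by
    refine LinearMap.sumElim_surjective fun w => ?_
    obtain ⟨v, hv⟩ := hφ (f w)
    obtain ⟨c, hc⟩ := (hmk _).1 <| by
      rw [← hr, LinearMap.comp_apply, hv, hfg.apply_apply_eq_zero]
    exact ⟨v, fun _ => c, hf <| by
      change f (L v + c • u) = _
      rw [hfL, hc, sub_self, zero_smul, sub_zero, hv]⟩
  choose b hb using fun i => (hmk (A i ⬝ᵥ r)).1 <| by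
    rw [← hr, LinearMap.comp_apply, hA, map_zero]
  have hdet := det_fromBlocks_mul_eq_neg_det (A := A) (b := b) (s := s) (t := t)
    (funext hb) (by rw [← ht]; ring)
  have hmem := det_fromBlocks_mem_fittingIdeal hsurj (L₂ := L₂) (A := A)
    (B := replicateCol Unit b) (C := replicateRow Unit s) (D := of fun _ _ => t)
    (fun i => hf <| by
      change f (L (A i) + b i • u) = f 0
      rw [hfL, hb, sub_self, zero_smul, sub_zero, hA, map_zero])
    (fun _ => hf <| by
      change f (L s + t • u) = f 0
      rw [hfL, show s ⬝ᵥ r - x * t = 1 by rw [← ht]; ring, one_smul, sub_self, map_zero])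
  rw [← neg_neg A.det, ← hdet, ← neg_mul, mul_comm _ x]
  exact Ideal.mul_mem_mul (Ideal.mem_span_singleton_self x) (neg_mem hmem)

end CyclicCokernel

theorem fittingIdeal_le_span_singleton_mul_of_exact {R M' M : Type*} [CommRing R]
    [AddCommGroup M'] [AddCommGroup M] [Module R M'] [Module R M] {x : R}
    {f : M' →ₗ[R] M} {g : M →ₗ[R] R ⧸ Ideal.span {x}} (hf : Function.Injective f)
    (hg : Function.Surjective g) (hfg : Function.Exact f g) :
    fittingIdeal R M ≤ Ideal.span {x} * fittingIdeal R M' :=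
  fittingIdeal_le fun _ _ hφ _ hA => det_mem_span_singleton_mul_fittingIdeal hf hg hfg hφ hA

theorem stmt10_general (R : Type*) [CommRing R]
    (M' M : Type*) [AddCommGroup M'] [AddCommGroup M] [Module R M'] [Module R M]
    (x : R)
    (f : M' →ₗ[R] M) (g : M →ₗ[R] R ⧸ Ideal.span {x})
    (hf : Function.Injective f) (hg : Function.Surjective g)
    (hexact : Function.Exact f g) :
    Ideal.span {x} * fittingIdeal R M' = fittingIdeal R M := by
  refine le_antisymm ?_ (fittingIdeal_le_span_singleton_mul_of_exact hf hg hexact)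
  calc Ideal.span {x} * fittingIdeal R M'
      ≤ fittingIdeal R (R ⧸ Ideal.span {x}) * fittingIdeal R M' :=
        Ideal.mul_mono_left <| (Ideal.span_singleton_le_iff_mem _).2 <|
          mem_fittingIdeal_quotient_span_singleton x
    _ = fittingIdeal R M' * fittingIdeal R (R ⧸ Ideal.span {x}) := mul_comm _ _
    _ ≤ fittingIdeal R M := fittingIdeal_mul_le_of_exact hg hexact

/-- Let `R` be a commutative ring and `0 → M' → M → R/(x) → 0` an exact
sequence of finitely generated `R`-modules whose cokernel is cyclic, of the form `R/(x)`
with `x` a non-zerodivisor.  If `Fitt_R(M)` is principal, generated by `θ`, then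
`(x) · Fitt_R(M') = Fitt_R(M)`; i.e. `Fitt_R(M')` is generated by `θ/x`. -/
theorem stmt10 (R : Type*) [CommRing R]
    (M' M : Type*) [AddCommGroup M'] [AddCommGroup M] [Module R M'] [Module R M]
    [Module.Finite R M'] [Module.Finite R M]
    (x : R) (hx : x ∈ nonZeroDivisors R)
    (f : M' →ₗ[R] M) (g : M →ₗ[R] R ⧸ Ideal.span {x})
    (hf : Function.Injective f) (hg : Function.Surjective g)
    (hexact : Function.Exact f g)
    (θ : R) (hθ : fittingIdeal R M = Ideal.span {θ}) :
    Ideal.span {x} * fittingIdeal R M' = fittingIdeal R M :=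
  stmt10_general R M' M x f g hf hg hexact
end

section
/- Let Λ be a profinite commutative ring with a filtration by open ideals I_m (with ⋂ I_m = 0), and let C be a profinite Λ-module such that C/I_m C is a finitely generated Λ/I_m-module for every m, with the number of generators bounded independently of m. Then C is a finitely generated Λ-module (generalized Nakayama lemma). -/
/-!
Open submodules form a basis of neighbourhoods of `0` in `C`: a profinite group has a basis of
open subgroups, and by compactness of `Λ` every open subgroup `H` contains the open submodule
`{c | ∀ l, l • c ∈ H}`. Every open submodule `U` contains some `I m • C`, because the colon ideal
`{a | a • C ⊆ U}` is open (compactness of `C`) and the closed sets `I m` decrease to `0` in the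
compact ring `Λ`. So for each open `U` the closed set of `r`-tuples generating `C` modulo `U` is
nonempty, and these sets are directed; by compactness of `C ^ r` one tuple generates `C` modulo
every open submodule. Its span is compact, hence closed, and dense, hence equal to `C`.
-/

open Filter Topology Submodule

theorem isOpen_setOf_forall_of_compactSpace {X Y : Type*} [TopologicalSpace X]
    [TopologicalSpace Y] [CompactSpace Y] {p : X → Y → Prop}
    (hp : IsOpen {q : X × Y | p q.1 q.2}) : IsOpen {x | ∀ y, p x y} := by
  have hcompl : {x | ∀ y, p x y}ᶜ = Prod.fst '' {q : X × Y | p q.1 q.2}ᶜ := by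
    ext x; simp
  rw [← isClosed_compl_iff, hcompl]
  exact isClosedMap_fst_of_compactSpace _ hp.isClosed_compl

section

variable {Λ C : Type*} [Ring Λ] [AddCommGroup C] [Module Λ C] [TopologicalSpace C]

theorem Submodule.isClosed_setOf_span_sup_eq_top [IsTopologicalAddGroup C] {ι : Type*}
    [Finite ι] (U : Submodule Λ C) (hU : IsOpen (U : Set C)) :
    IsClosed {f : ι → C | span Λ (Set.range f) ⊔ U = ⊤} := by
  have : DiscreteTopology (C ⧸ U) := QuotientAddGroup.discreteTopology hU
  have hpre : {f : ι → C | span Λ (Set.range f) ⊔ U = ⊤} =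
      (fun f i => U.mkQ (f i)) ⁻¹' {g | span Λ (Set.range g) = ⊤} := by
    ext f
    have hspan : span Λ (Set.range fun i => U.mkQ (f i)) = (span Λ (Set.range f)).map U.mkQ := by
      rw [map_span, ← Set.range_comp]; rfl
    rw [Set.mem_preimage, Set.mem_ofPred_eq, Set.mem_ofPred_eq, hspan, map_mkQ_eq_top, sup_comm]
  rw [hpre]
  exact (isClosed_discrete _).preimage
    (continuous_pi fun i => U.continuous_mkQ.comp (continuous_apply i))

theorem exists_forall_span_sup_eq_top [IsTopologicalAddGroup C] [CompactSpace C] {ι : Type*}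
    [Finite ι]
    (h : ∀ U : Submodule Λ C, IsOpen (U : Set C) → ∃ f : ι → C, span Λ (Set.range f) ⊔ U = ⊤) :
    ∃ f : ι → C, ∀ U : Submodule Λ C, IsOpen (U : Set C) → span Λ (Set.range f) ⊔ U = ⊤ := by
  let t : {U : Submodule Λ C // IsOpen (U : Set C)} → Set (ι → C) :=
    fun U => {f | span Λ (Set.range f) ⊔ U.1 = ⊤}
  have : Nonempty {U : Submodule Λ C // IsOpen (U : Set C)} := ⟨⟨⊤, isOpen_univ⟩⟩
  have hdir : Directed (· ⊇ ·) t := fun U V =>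
    ⟨⟨U.1 ⊓ V.1, U.2.inter V.2⟩, fun f hf => eq_top_mono (sup_le_sup_left inf_le_left _) hf,
      fun f hf => eq_top_mono (sup_le_sup_left inf_le_right _) hf⟩
  have hclosed : ∀ U, IsClosed (t U) := fun U => U.1.isClosed_setOf_span_sup_eq_top U.2
  obtain ⟨f, hf⟩ := IsCompact.nonempty_iInter_of_directed_nonempty_isCompact_isClosed t hdir
    (fun U => h U.1 U.2) (fun U => (hclosed U).isCompact) hclosed
  exact ⟨f, fun U hU => Set.mem_iInter.1 hf ⟨U, hU⟩⟩

variable [TopologicalSpace Λ] [ContinuousSMul Λ C]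

theorem AddSubgroup.exists_isOpen_submodule_le [CompactSpace Λ] (H : AddSubgroup C)
    (hH : IsOpen (H : Set C)) : ∃ W : Submodule Λ C, IsOpen (W : Set C) ∧ W.toAddSubgroup ≤ H :=
  ⟨{ carrier := {c | ∀ l : Λ, l • c ∈ H}
     add_mem' := fun ha hb l => by simpa [smul_add] using H.add_mem (ha l) (hb l)
     zero_mem' := fun l => by simp
     smul_mem' := fun a c hc l => by simpa [mul_smul] using hc (l * a) },
    isOpen_setOf_forall_of_compactSpace (hH.preimage (continuous_snd.smul continuous_fst)),
    fun c hc => by simpa using hc 1⟩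

theorem exists_isOpen_submodule_subset_of_mem_nhds [CompactSpace Λ] [IsTopologicalAddGroup C]
    [CompactSpace C] [TotallyDisconnectedSpace C] {O : Set C} (hO : O ∈ 𝓝 0) :
    ∃ W : Submodule Λ C, IsOpen (W : Set C) ∧ (W : Set C) ⊆ O := by
  obtain ⟨V, hVO, hV, h0⟩ := mem_nhds_iff.1 hO
  obtain ⟨H, hH⟩ := ProfiniteGrp.exist_openNormalAddSubgroup_sub_open_nhds_of_zero hV h0
  obtain ⟨W, hW, hWH⟩ := H.toAddSubgroup.exists_isOpen_submodule_le (Λ := Λ) H.isOpen'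
  exact ⟨W, hW, fun c hc => hVO (hH (hWH hc))⟩

theorem Submodule.isOpen_colon_univ [CompactSpace C] (U : Submodule Λ C)
    (hU : IsOpen (U : Set C)) : IsOpen (U.colon Set.univ : Set Λ) := by
  have := isOpen_setOf_forall_of_compactSpace (p := fun (a : Λ) (c : C) => a • c ∈ U)
    (hU.preimage continuous_smul)
  convert this using 1
  ext a
  simp [mem_colon]

theorem Submodule.exists_smul_top_le_of_isOpen [IsTopologicalAddGroup Λ] [CompactSpace Λ]
    [CompactSpace C] {I : ℕ → Ideal Λ} (hopen : ∀ m, IsOpen (I m : Set Λ)) (hI : Antitone I)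
    (hinter : ⨅ m, I m = ⊥) (U : Submodule Λ C) (hU : IsOpen (U : Set C)) :
    ∃ m, I m • (⊤ : Submodule Λ C) ≤ U := by
  have hnhds : ∀ x ∈ ⋂ m, (I m : Set Λ), (U.colon Set.univ : Set Λ) ∈ 𝓝 x := by
    intro x hx
    have hx0 : x = 0 := by
      simpa [← Ideal.mem_bot, ← hinter, Submodule.mem_iInf] using hx
    exact hx0 ▸ (U.isOpen_colon_univ hU).mem_nhds (zero_mem _)
  obtain ⟨m, hm⟩ := exists_subset_nhds_of_compactSpace
    (SetLike.coe_mono.comp_antitone hI).directed_ge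
    (fun m => (I m).toAddSubgroup.isClosed_of_isOpen (hopen m)) hnhds
  exact ⟨m, smul_le.2 fun a ha c _ => mem_colon.1 (hm ha) c trivial⟩

theorem Submodule.isClosed_span_range [CompactSpace Λ] [ContinuousAdd C] [T2Space C]
    {ι : Type*} [Fintype ι] (f : ι → C) : IsClosed (span Λ (Set.range f) : Set C) := by
  have : (span Λ (Set.range f) : Set C) = Set.range fun l : ι → Λ => ∑ i, l i • f i := by
    ext; simp [mem_span_range_iff_exists_fun]
  rw [this]
  exact (isCompact_range (by fun_prop)).isClosed

theorem Submodule.eq_top_of_isClosed_of_sup_eq_top [CompactSpace Λ] [IsTopologicalAddGroup C]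
    [CompactSpace C] [TotallyDisconnectedSpace C] (N : Submodule Λ C)
    (hN : IsClosed (N : Set C)) (h : ∀ U : Submodule Λ C, IsOpen (U : Set C) → N ⊔ U = ⊤) :
    N = ⊤ := by
  refine eq_top_iff'.2 fun x => ?_
  rw [← SetLike.mem_coe, ← hN.closure_eq, mem_closure_iff_nhds_zero]
  intro O hO
  obtain ⟨W, hW, hWO⟩ := exists_isOpen_submodule_subset_of_mem_nhds (Λ := Λ) hO
  obtain ⟨y, hy, z, hz, rfl⟩ := mem_sup.1 (h W hW ▸ mem_top : x ∈ N ⊔ W)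
  exact ⟨y, hy, hWO (by simpa using W.neg_mem hz)⟩

end

theorem stmt17_general (Λ : Type*) [CommRing Λ] [TopologicalSpace Λ] [IsTopologicalRing Λ]
    [CompactSpace Λ]
    (C : Type*) [AddCommGroup C] [Module Λ C] [TopologicalSpace C]
    [IsTopologicalAddGroup C] [CompactSpace C] [T2Space C] [TotallyDisconnectedSpace C]
    [ContinuousSMul Λ C]
    (I : ℕ → Ideal Λ) (hopen : ∀ m, IsOpen (I m : Set Λ))
    (hmono : ∀ m n, m ≤ n → I n ≤ I m)
    (hinter : ⨅ m, I m = ⊥)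
    (r : ℕ)
    (hfg : ∀ m, ∃ f : Fin r → C,
      Submodule.span Λ (Set.range f) ⊔ (I m • (⊤ : Submodule Λ C)) = ⊤) :
    Module.Finite Λ C := by
  obtain ⟨f, hf⟩ := exists_forall_span_sup_eq_top (Λ := Λ) (C := C) (ι := Fin r) fun U hU => by
    obtain ⟨m, hm⟩ := exists_smul_top_le_of_isOpen hopen hmono hinter U hU
    obtain ⟨f, hf⟩ := hfg m
    exact ⟨f, eq_top_mono (sup_le_sup_left hm _) hf⟩
  have hspan : span Λ (Set.range f) = ⊤ :=
    (span Λ (Set.range f)).eq_top_of_isClosed_of_sup_eq_top (isClosed_span_range f) hf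
  exact Module.Finite.of_fg_top ⟨(Set.finite_range f).toFinset, by simpa using hspan⟩

/-- generalized Nakayama lemma, Balister–Howson: Let `Λ` be a profinite
(compact Hausdorff topological) commutative ring with a filtration by open ideals `I m`
with `⋂ I m = 0`, and let `C` be a profinite (compact Hausdorff) topological `Λ`-module
such that each `C / I_m C` is generated over `Λ / I m` by at most `r` elements, with `r`
independent of `m`.  Then `C` is a finitely generated `Λ`-module. -/
theorem stmt17 (Λ : Type*) [CommRing Λ] [TopologicalSpace Λ] [IsTopologicalRing Λ]
    [CompactSpace Λ] [T2Space Λ] [TotallyDisconnectedSpace Λ]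
    (C : Type*) [AddCommGroup C] [Module Λ C] [TopologicalSpace C]
    [IsTopologicalAddGroup C] [CompactSpace C] [T2Space C] [TotallyDisconnectedSpace C]
    [ContinuousSMul Λ C]
    (I : ℕ → Ideal Λ) (hopen : ∀ m, IsOpen (I m : Set Λ))
    (hmono : ∀ m n, m ≤ n → I n ≤ I m)
    (hinter : ⨅ m, I m = ⊥)
    (r : ℕ)
    (hfg : ∀ m, ∃ f : Fin r → C,
      Submodule.span Λ (Set.range f) ⊔ (I m • (⊤ : Submodule Λ C)) = ⊤) :
    Module.Finite Λ C :=
  stmt17_general Λ C I hopen hmono hinter r hfg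
end

section
/- Assume the class number of A is 1 and d_∞ = 1, with uniformizer π_∞ = π_p^{-1} for a degree-1 prime p with positive generator π_p. For every y ∈ ℤ_p, the character Ψ_y : G_S → U_1(∞) defined on Frobenius elements by Ψ_y(φ_ν) = ⟨π_ν⟩_∞^{-y} satisfies Ψ_y = y-th power map ∘ π̂ ∘ rec_S^{-1}, where rec_S : completed idele class group mod units outside S → G_S is the Artin reciprocity isomorphism and π̂ is the projection onto the 1-unit component U_1(∞) in the decomposition of the completed idele class group. -/
/-!
Both `Ψ` and `g ↦ (π̂ (rec⁻¹ g))^y` are continuous homomorphisms `G → U` (the second because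
`u ↦ u^y` is multiplicative) and they agree on the Frobenius elements. Two such homomorphisms
agree on the subgroup these generate, which is dense, so they agree everywhere as `U` is Hausdorff.
-/

theorem MonoidHom.ext_on_dense_closure {G M : Type*} [Group G] [TopologicalSpace G] [Monoid M]
    [TopologicalSpace M] [T2Space M] {s : Set G} (hs : Dense (Subgroup.closure s : Set G))
    {f g : G →* M} (hf : Continuous f) (hg : Continuous g) (h : s.EqOn f g) : f = g :=
  DFunLike.coe_injective (hf.ext_on hs hg (MonoidHom.eqOn_closure h))

theorem stmt19_general (p : ℕ) [Fact p.Prime]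
    -- the group of 1-units with its ℤ_p-power structure
    (U : Type*) [CommGroup U] [TopologicalSpace U] [T2Space U]
    (pow : U → ℤ_[p] → U)
    (hpow_mul : ∀ (u v : U) (y : ℤ_[p]), pow (u * v) y = pow u y * pow v y)
    (hpow_cont : ∀ y : ℤ_[p], Continuous fun u : U => pow u y)
    -- the Galois group `G_S`, the completed idele class group `Ĉ`,
    -- reciprocity `rec` and the projection `π̂` onto the 1-unit component
    (G : Type*) [CommGroup G] [TopologicalSpace G]
    (Chat : Type*) [CommGroup Chat] [TopologicalSpace Chat]
    (rec : Chat ≃* G) (hrec_symm_cont : Continuous rec.symm)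
    (pihat : Chat →* U) (hpihat_cont : Continuous pihat)
    -- the Frobenius elements `φ ν` (for places `ν ∉ S`), which topologically
    -- generate `G_S`, and the 1-unit parts `u ν = ⟨π_ν⟩_∞` of their uniformizers
    (P : Type*) (φ : P → G) (u : P → U)
    (hgen : Dense ((Subgroup.closure (Set.range φ) : Subgroup G) : Set G))
    (hfrob : ∀ ν : P, pihat (rec.symm (φ ν)) = (u ν)⁻¹)
    -- the character Ψ_y
    (y : ℤ_[p]) (Ψ : G →* U) (hΨ_cont : Continuous Ψ)
    (hΨ_frob : ∀ ν : P, Ψ (φ ν) = pow ((u ν)⁻¹) y) :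
    ∀ g : G, Ψ g = pow (pihat (rec.symm g)) y := by
  let powHom : U →* U := MonoidHom.mk' (pow · y) fun a b => hpow_mul a b y
  have hΨ : Ψ = powHom.comp (pihat.comp rec.symm.toMonoidHom) := by
    refine MonoidHom.ext_on_dense_closure hgen hΨ_cont
      ((hpow_cont y).comp (hpihat_cont.comp hrec_symm_cont)) ?_
    rintro _ ⟨ν, rfl⟩
    simp [powHom, hΨ_frob, hfrob]
  exact DFunLike.congr_fun hΨ

/-- Assume the class number of `A` is 1 and `d_∞ = 1`, so that the
completed idele class group `Ĉ = widehat{C_F/O_S}` decomposes as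
`Ẑ × U₁(∞) × ∏_{ν ∈ S, ν ≠ ∞} O_νˣ`, with projection `π̂ : Ĉ → U₁(∞)` onto the
1-unit component, and Artin reciprocity gives a topological isomorphism
`rec_S : Ĉ ≃ G_S`.  The 1-units `U` form a topological `ℤ_p`-module with power map
`pow : U → ℤ_p → U` (so `u^y` makes sense for `y ∈ ℤ_p`).  For `y ∈ ℤ_p` let
`Ψ_y : G_S → U` be the continuous character with `Ψ_y(φ_ν) = ⟨π_ν⟩_∞^{-y}` on the
(topologically generating) Frobenius elements; since `π̂(rec_S⁻¹(φ_ν)) = ⟨π_ν⟩_∞⁻¹`,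
the diagram commutes:  `Ψ_y = (·^y) ∘ π̂ ∘ rec_S⁻¹` on all of `G_S`. -/
theorem stmt19 (p : ℕ) [Fact p.Prime]
    -- the group of 1-units with its ℤ_p-power structure
    (U : Type*) [CommGroup U] [TopologicalSpace U] [IsTopologicalGroup U] [T2Space U]
    (pow : U → ℤ_[p] → U)
    (hpow_one : ∀ u : U, pow u 1 = u)
    (hpow_add : ∀ (u : U) (y z : ℤ_[p]), pow u (y + z) = pow u y * pow u z)
    (hpow_mul : ∀ (u v : U) (y : ℤ_[p]), pow (u * v) y = pow u y * pow v y)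
    (hpow_cont : ∀ y : ℤ_[p], Continuous fun u : U => pow u y)
    -- the Galois group `G_S`, the completed idele class group `Ĉ`,
    -- reciprocity `rec` and the projection `π̂` onto the 1-unit component
    (G : Type*) [CommGroup G] [TopologicalSpace G] [IsTopologicalGroup G]
    (Chat : Type*) [CommGroup Chat] [TopologicalSpace Chat] [IsTopologicalGroup Chat]
    (rec : Chat ≃* G) (hrec_cont : Continuous rec) (hrec_symm_cont : Continuous rec.symm)
    (pihat : Chat →* U) (hpihat_cont : Continuous pihat)
    -- the Frobenius elements `φ ν` (for places `ν ∉ S`), which topologically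
    -- generate `G_S`, and the 1-unit parts `u ν = ⟨π_ν⟩_∞` of their uniformizers
    (P : Type*) (φ : P → G) (u : P → U)
    (hgen : Dense ((Subgroup.closure (Set.range φ) : Subgroup G) : Set G))
    (hfrob : ∀ ν : P, pihat (rec.symm (φ ν)) = (u ν)⁻¹)
    -- the character Ψ_y
    (y : ℤ_[p]) (Ψ : G →* U) (hΨ_cont : Continuous Ψ)
    (hΨ_frob : ∀ ν : P, Ψ (φ ν) = pow ((u ν)⁻¹) y) :
    ∀ g : G, Ψ g = pow (pihat (rec.symm g)) y :=
  stmt19_general p U pow hpow_mul hpow_cont G Chat rec hrec_symm_cont pihat hpihat_cont P φ u hgen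
    hfrob y Ψ hΨ_cont hΨ_frob
end
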